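/- Let (Ω, S) be a {1,k}-valenced association scheme, and let x, y, z ∈ S_k and r ∈ x*z, s ∈ z*y form an initial configuration (x ∼ z ∼ y). If there exists q ∈ S_k such that qq* ∩ (xx*yy* ∪ xx*zz* ∪ zz*yy*) = {1}, then r and s are linked with respect to (x,y,z). -/
import Mathlib


open Finset

abbrev BRel (Ω : Type*) := Finset (Ω × Ω)

variable {Ω : Type*} [Fintype Ω] [DecidableEq Ω]

/-- The diagonal relation `1_Ω`. -/
def diagRel (Ω : Type*) [Fintype Ω] [DecidableEq Ω] : BRel Ω :=
  Finset.univ.filter (fun p => p.1 = p.2)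

/-- The converse relation `r*`. -/
def convRel (r : BRel Ω) : BRel Ω := r.image Prod.swap

/-- Relational composition `a ∘ b`. -/
def compBRel (a b : BRel Ω) : BRel Ω :=
  Finset.univ.filter (fun p => ∃ γ, (p.1, γ) ∈ a ∧ (γ, p.2) ∈ b)

/-- An association scheme on a finite set `Ω`: a partition `S` of `Ω × Ω` into nonempty
basis relations, containing the diagonal, closed under converse, with well-defined
intersection numbers `c r s t`. -/
structure AssocScheme (Ω : Type*) [Fintype Ω] [DecidableEq Ω] where
  S : Finset (BRel Ω)
  nonempty : ∀ s ∈ S, s.Nonempty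
  partition : ∀ p : Ω × Ω, ∃! s, s ∈ S ∧ p ∈ s
  diag_mem : diagRel Ω ∈ S
  conv_mem : ∀ s ∈ S, convRel s ∈ S
  c : BRel Ω → BRel Ω → BRel Ω → ℕ
  c_spec : ∀ r ∈ S, ∀ s ∈ S, ∀ t ∈ S, ∀ p ∈ t,
    (Finset.univ.filter (fun γ => (p.1, γ) ∈ r ∧ (γ, p.2) ∈ s)).card = c r s t

namespace AssocScheme

variable (X : AssocScheme Ω)

/-- The valency `n_s = c_{s,s*}^{1}`. -/
def n (s : BRel Ω) : ℕ := X.c s (convRel s) (diagRel Ω)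

/-- The complex product `rs` of two basis relations: all `t ∈ S` with `c_{r,s}^t ≠ 0`. -/
def cp (r s : BRel Ω) : Finset (BRel Ω) := X.S.filter (fun t => X.c r s t ≠ 0)

/-- The complex product of two sets of basis relations. -/
def cpS (A B : Finset (BRel Ω)) : Finset (BRel Ω) :=
  A.biUnion fun a => B.biUnion fun b => X.cp a b

/-- `S_k`: the basis relations of valency `k`. -/
def Sk (k : ℕ) : Finset (BRel Ω) := X.S.filter (fun s => X.n s = k)

/-- `x ∼ y`: every `s` in the complex product `x*y` satisfies `c_{x,s}^y = 1`. -/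
def adj (x y : BRel Ω) : Prop := ∀ s ∈ X.cp (convRel x) y, X.c x s y = 1

/-- `r(α,β)`: the unique basis relation containing `(α,β)`. -/
noncomputable def rel (α β : Ω) : BRel Ω := (X.partition (α, β)).choose

/-- The indistinguishing number `c(s) = Σ_t c_{t,t*}^s`. -/
def ind (s : BRel Ω) : ℕ := ∑ t ∈ X.S, X.c t (convRel t) s

/-- `k`-saturated: every at most four element subset of `S_k` has a common neighbor. -/
def kSaturated (k : ℕ) : Prop :=
  ∀ T ⊆ X.Sk k, T.card ≤ 4 → ∃ y ∈ X.Sk k, ∀ x ∈ T, X.adj y x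

/-- `r ∈ x*z` and `s ∈ z*y` are linked with respect to `(x,y,z)`, with witness `t`. -/
def linked (k : ℕ) (x y z r s t : BRel Ω) : Prop :=
  ∃ q ∈ X.Sk k, X.adj q x ∧ X.adj q y ∧ X.adj q z ∧
    ∃ u ∈ X.cp (convRel x) q, ∃ v ∈ X.cp (convRel y) q, ∃ w ∈ X.cp (convRel z) q,
      t ∈ X.cp r s ∧
      X.cp (convRel x) z ∩ X.cp u (convRel w) = {r} ∧
      X.cp (convRel z) y ∩ X.cp w (convRel v) = {s} ∧
      X.cp (convRel x) y ∩ X.cp u (convRel v) = {t}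

/-- Desarguesian with respect to `S_k`. -/
def Desarguesian (k : ℕ) : Prop :=
  ∀ x ∈ X.Sk k, ∀ y ∈ X.Sk k, ∀ z ∈ X.Sk k, X.adj x z → X.adj z y →
    ∀ r ∈ X.cp (convRel x) z, ∀ s ∈ X.cp (convRel z) y, ∃ t, X.linked k x y z r s t

end AssocScheme

/-- `αr = {β : (α,β) ∈ r}`. -/
def relImage (r : BRel Ω) (α : Ω) : Finset Ω := (r.filter (fun p => p.1 = α)).image Prod.snd

/-- The restriction `r_{x,y} = r ∩ (αx × αy)`. -/
def restrictRel (α : Ω) (r x y : BRel Ω) : BRel Ω :=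
  r.filter (fun p => p.1 ∈ relImage x α ∧ p.2 ∈ relImage y α)


/-- An algebraic isomorphism: a bijection between the sets of basis relations
preserving all intersection numbers. -/
def AlgIso {Ω Ω' : Type*} [Fintype Ω] [DecidableEq Ω] [Fintype Ω'] [DecidableEq Ω']
    (X : AssocScheme Ω) (X' : AssocScheme Ω') (φ : BRel Ω → BRel Ω') : Prop :=
  Set.BijOn φ ↑X.S ↑X'.S ∧
    ∀ r ∈ X.S, ∀ s ∈ X.S, ∀ t ∈ X.S, X.c r s t = X'.c (φ r) (φ s) (φ t)

/-- A `φ`-faithful map with domain `D`. -/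
def Faithful {Ω Ω' : Type*} [Fintype Ω] [DecidableEq Ω] [Fintype Ω'] [DecidableEq Ω']
    (X : AssocScheme Ω) (X' : AssocScheme Ω') (φ : BRel Ω → BRel Ω')
    (D : Finset Ω) (f : Ω → Ω') : Prop :=
  Set.InjOn f ↑D ∧ ∀ a ∈ D, ∀ b ∈ D, φ (X.rel a b) = X'.rel (f a) (f b)

/-- `f` is `φ`-extendable to the point `γ`. -/
def ExtendableAt {Ω Ω' : Type*} [Fintype Ω] [DecidableEq Ω] [Fintype Ω'] [DecidableEq Ω']
    (X : AssocScheme Ω) (X' : AssocScheme Ω') (φ : BRel Ω → BRel Ω')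
    (D : Finset Ω) (f : Ω → Ω') (γ : Ω) : Prop :=
  ∃ g : Ω → Ω', (∀ a ∈ D, g a = f a) ∧ Faithful X X' φ (insert γ D) g


set_option linter.unusedSectionVars false
set_option linter.unusedVariables false
set_option maxHeartbeats 1000000

namespace AssocScheme
variable (X : AssocScheme Ω)

-- basic lemmas
lemma mem_diagRel {α β : Ω} : (α, β) ∈ diagRel Ω ↔ α = β := by
  simp [diagRel]

lemma mem_convRel {r : BRel Ω} {α β : Ω} : (α, β) ∈ convRel r ↔ (β, α) ∈ r := by
  constructor
  · intro h
    obtain ⟨p, hp, he⟩ := Finset.mem_image.1 h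
    obtain ⟨h1, h2⟩ := Prod.mk.injEq .. ▸ he
    cases p with
    | mk a b => simp [Prod.swap] at he; obtain ⟨e1, e2⟩ := he; subst e1; subst e2; exact hp
  · intro h
    exact Finset.mem_image.2 ⟨(β, α), h, rfl⟩

lemma convRel_convRel (r : BRel Ω) : convRel (convRel r) = r := by
  ext ⟨a, b⟩
  simp [mem_convRel]

lemma rel_mem_S (α β : Ω) : X.rel α β ∈ X.S := (X.partition (α, β)).choose_spec.1.1

lemma mem_rel (α β : Ω) : (α, β) ∈ X.rel α β := (X.partition (α, β)).choose_spec.1.2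

lemma rel_eq {s : BRel Ω} (hs : s ∈ X.S) {α β : Ω} (h : (α, β) ∈ s) : X.rel α β = s :=
  ((X.partition (α, β)).choose_spec.2 s ⟨hs, h⟩).symm

lemma rel_diag (α : Ω) : X.rel α α = diagRel Ω :=
  X.rel_eq X.diag_mem (mem_diagRel.2 rfl)

lemma filter_contains (p : Ω × Ω) : X.S.filter (fun s => p ∈ s) = {X.rel p.1 p.2} := by
  ext s
  simp only [Finset.mem_filter, Finset.mem_singleton]
  constructor
  · rintro ⟨h1, h2⟩
    exact (X.rel_eq h1 h2).symm
  · rintro rfl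
    exact ⟨X.rel_mem_S _ _, X.mem_rel _ _⟩

lemma cp_mem_S {a b t : BRel Ω} (ht : t ∈ X.cp a b) : t ∈ X.S := (Finset.mem_filter.1 ht).1

lemma exists_mid_of_c_ne {a b t : BRel Ω} (ha : a ∈ X.S) (hb : b ∈ X.S) (ht : t ∈ X.S)
    (hc : X.c a b t ≠ 0) {α γ : Ω} (hp : (α, γ) ∈ t) : ∃ m, (α, m) ∈ a ∧ (m, γ) ∈ b := by
  have h := X.c_spec a ha b hb t ht (α, γ) hp
  rw [← h] at hc
  obtain ⟨m, hm⟩ := Finset.card_pos.1 (Nat.pos_of_ne_zero hc)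
  exact ⟨m, (Finset.mem_filter.1 hm).2⟩

lemma c_ne_of_mid {a b t : BRel Ω} (ha : a ∈ X.S) (hb : b ∈ X.S) (ht : t ∈ X.S)
    {α m γ : Ω} (hp : (α, γ) ∈ t) (h1 : (α, m) ∈ a) (h2 : (m, γ) ∈ b) :
    X.c a b t ≠ 0 := by
  have h := X.c_spec a ha b hb t ht (α, γ) hp
  rw [← h]
  have : m ∈ Finset.univ.filter (fun m => (α, m) ∈ a ∧ (m, γ) ∈ b) := by
    simp [h1, h2]
  exact Finset.card_ne_zero_of_mem this

lemma mem_cp_of_witness {a b : BRel Ω} (ha : a ∈ X.S) (hb : b ∈ X.S)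
    {α β γ : Ω} (h1 : (α, β) ∈ a) (h2 : (β, γ) ∈ b) : X.rel α γ ∈ X.cp a b :=
  Finset.mem_filter.2 ⟨X.rel_mem_S α γ,
    X.c_ne_of_mid ha hb (X.rel_mem_S α γ) (X.mem_rel α γ) h1 h2⟩

lemma exists_witness_of_mem_cp {a b t : BRel Ω} (ha : a ∈ X.S) (hb : b ∈ X.S)
    (ht : t ∈ X.cp a b) {α γ : Ω} (h : (α, γ) ∈ t) : ∃ m, (α, m) ∈ a ∧ (m, γ) ∈ b :=
  X.exists_mid_of_c_ne ha hb (X.cp_mem_S ht) (Finset.mem_filter.1 ht).2 h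

/-- if one triangle exists witnessing `t ∈ ab`, every pair of `t` has a midpoint. -/
lemma triangle_transfer {a b t : BRel Ω} (ha : a ∈ X.S) (hb : b ∈ X.S) (ht : t ∈ X.S)
    {α β γ : Ω} (h1 : (α, β) ∈ a) (h2 : (β, γ) ∈ b) (h3 : (α, γ) ∈ t)
    {α' γ' : Ω} (h : (α', γ') ∈ t) : ∃ m, (α', m) ∈ a ∧ (m, γ') ∈ b :=
  X.exists_mid_of_c_ne ha hb ht (X.c_ne_of_mid ha hb ht h3 h1 h2) h

lemma conv_mem_cp {a b t : BRel Ω} (ha : a ∈ X.S) (hb : b ∈ X.S) (ht : t ∈ X.cp a b) :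
    convRel t ∈ X.cp (convRel b) (convRel a) := by
  obtain ⟨p, hp⟩ := X.nonempty t (X.cp_mem_S ht)
  obtain ⟨m, hm1, hm2⟩ := X.exists_witness_of_mem_cp ha hb ht (show (p.1, p.2) ∈ t from hp)
  have hconv : (p.2, p.1) ∈ convRel t := mem_convRel.2 hp
  have hrel : X.rel p.2 p.1 = convRel t :=
    X.rel_eq (X.conv_mem t (X.cp_mem_S ht)) hconv
  rw [← hrel]
  exact X.mem_cp_of_witness (X.conv_mem b hb) (X.conv_mem a ha)
    (mem_convRel.2 hm2) (mem_convRel.2 hm1)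

lemma card_point {s : BRel Ω} (hs : s ∈ X.S) (α : Ω) :
    (Finset.univ.filter fun γ => (α, γ) ∈ s).card = X.n s := by
  have hd : ((α, α) : Ω × Ω) ∈ diagRel Ω := mem_diagRel.2 rfl
  have h := X.c_spec s hs (convRel s) (X.conv_mem s hs) (diagRel Ω) X.diag_mem (α, α) hd
  rw [n, ← h]
  congr 1
  apply Finset.filter_congr
  intro γ _
  simp only [mem_convRel]
  exact ⟨fun h => ⟨h, h⟩, fun h => h.1⟩

lemma exists_point {s : BRel Ω} (hs : s ∈ X.S) (hn : X.n s ≠ 0) (α : Ω) :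
    ∃ γ, (α, γ) ∈ s := by
  have h := X.card_point hs α
  rw [← h] at hn
  obtain ⟨γ, hγ⟩ := Finset.card_pos.1 (Nat.pos_of_ne_zero hn)
  exact ⟨γ, (Finset.mem_filter.1 hγ).2⟩

lemma card_rel {s : BRel Ω} (hs : s ∈ X.S) : s.card = X.n s * Fintype.card Ω := by
  have := Finset.card_eq_sum_card_fiberwise
    (f := fun p : Ω × Ω => p.1) (s := s) (t := Finset.univ) (fun x _ => Finset.mem_univ _)
  rw [this]
  have : ∀ α ∈ (Finset.univ : Finset Ω),
      (s.filter fun p => p.1 = α).card = X.n s := by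
    intro α _
    rw [← X.card_point hs α]
    apply Finset.card_bij (fun p _ => p.2)
    · intro p hp
      obtain ⟨hp1, hp2⟩ := Finset.mem_filter.1 hp
      simp only [Finset.mem_filter, Finset.mem_univ, true_and]
      cases p; subst hp2; exact hp1
    · intro p hp p' hp' he
      obtain ⟨hp1, hp2⟩ := Finset.mem_filter.1 hp
      obtain ⟨hp1', hp2'⟩ := Finset.mem_filter.1 hp'
      cases p; cases p'
      simp_all
    · intro γ hγ
      exact ⟨(α, γ), Finset.mem_filter.2 ⟨(Finset.mem_filter.1 hγ).2, rfl⟩, rfl⟩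
  rw [Finset.sum_congr rfl this, Finset.sum_const, Finset.card_univ, smul_eq_mul, mul_comm]

lemma n_ne_zero {s : BRel Ω} (hs : s ∈ X.S) : X.n s ≠ 0 := by
  obtain ⟨p, hp⟩ := X.nonempty s hs
  intro h
  have := X.card_rel hs
  rw [h, zero_mul, Finset.card_eq_zero] at this
  rw [this] at hp
  exact absurd hp (Finset.notMem_empty _)

lemma n_conv {s : BRel Ω} (hs : s ∈ X.S) : X.n (convRel s) = X.n s := by
  obtain ⟨p, hp⟩ := X.nonempty s hs
  have hΩ : 0 < Fintype.card Ω := Fintype.card_pos_iff.2 ⟨p.1⟩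
  have h1 := X.card_rel (X.conv_mem s hs)
  have h2 := X.card_rel hs
  have hcard : (convRel s).card = s.card :=
    Finset.card_image_of_injective _ Prod.swap_injective
  rw [hcard, h2] at h1
  exact (Nat.eq_of_mul_eq_mul_right hΩ h1.symm)


lemma c_transfer {r s t : BRel Ω} (hr : r ∈ X.S) (hs : s ∈ X.S) (ht : t ∈ X.S) :
    X.n t * X.c r s t = X.n r * X.c t (convRel s) r := by
  obtain ⟨p, hp⟩ := X.nonempty t ht
  set α := p.1 with hα
  have key1 : ∀ γ : Ω, (∑ β : Ω, if (α, β) ∈ r ∧ (β, γ) ∈ s ∧ (α, γ) ∈ t then 1 else 0)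
      = if (α, γ) ∈ t then X.c r s t else 0 := by
    intro γ
    by_cases hγ : (α, γ) ∈ t
    · rw [if_pos hγ, ← X.c_spec r hr s hs t ht (α, γ) hγ, Finset.card_filter]
      apply Finset.sum_congr rfl
      intro β _
      simp [hγ]
    · rw [if_neg hγ]
      apply Finset.sum_eq_zero
      intro β _
      simp [hγ]
  have key2 : ∀ β : Ω, (∑ γ : Ω, if (α, β) ∈ r ∧ (β, γ) ∈ s ∧ (α, γ) ∈ t then 1 else 0)
      = if (α, β) ∈ r then X.c t (convRel s) r else 0 := by
    intro β
    by_cases hβ : (α, β) ∈ r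
    · rw [if_pos hβ, ← X.c_spec t ht (convRel s) (X.conv_mem s hs) r hr (α, β) hβ,
        Finset.card_filter]
      apply Finset.sum_congr rfl
      intro γ _
      by_cases h1 : (α, γ) ∈ t <;> by_cases h2 : (β, γ) ∈ s <;>
        simp [h1, h2, hβ, mem_convRel]
    · rw [if_neg hβ]
      apply Finset.sum_eq_zero
      intro γ _
      simp [hβ]
  have e1 : (∑ γ : Ω, if (α, γ) ∈ t then X.c r s t else 0) = X.n t * X.c r s t := by
    rw [← Finset.sum_filter, Finset.sum_const, smul_eq_mul, X.card_point ht α]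
  have e2 : (∑ β : Ω, if (α, β) ∈ r then X.c t (convRel s) r else 0)
      = X.n r * X.c t (convRel s) r := by
    rw [← Finset.sum_filter, Finset.sum_const, smul_eq_mul, X.card_point hr α]
  calc X.n t * X.c r s t
      = ∑ γ : Ω, if (α, γ) ∈ t then X.c r s t else 0 := e1.symm
    _ = ∑ γ : Ω, ∑ β : Ω, if (α, β) ∈ r ∧ (β, γ) ∈ s ∧ (α, γ) ∈ t then 1 else 0 :=
        (Finset.sum_congr rfl (fun γ _ => (key1 γ).symm))
    _ = ∑ β : Ω, ∑ γ : Ω, if (α, β) ∈ r ∧ (β, γ) ∈ s ∧ (α, γ) ∈ t then 1 else 0 :=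
        Finset.sum_comm
    _ = ∑ β : Ω, if (α, β) ∈ r then X.c t (convRel s) r else 0 :=
        (Finset.sum_congr rfl (fun β _ => key2 β))
    _ = X.n r * X.c t (convRel s) r := e2

lemma sum_c_right {q t0 : BRel Ω} (hq : q ∈ X.S) (ht : t0 ∈ X.S) {p : Ω × Ω} (hp : p ∈ t0) :
    ∑ s ∈ X.S, X.c q s t0 = X.n q := by
  have h1 : ∀ s ∈ X.S, X.c q s t0
      = ∑ m : Ω, if (p.1, m) ∈ q ∧ (m, p.2) ∈ s then 1 else 0 := by
    intro s hs
    rw [← X.c_spec q hq s hs t0 ht p hp, Finset.card_filter]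
  rw [Finset.sum_congr rfl h1, Finset.sum_comm]
  have h2 : ∀ m : Ω, (∑ s ∈ X.S, if (p.1, m) ∈ q ∧ (m, p.2) ∈ s then 1 else 0)
      = if (p.1, m) ∈ q then 1 else 0 := by
    intro m
    by_cases hm : (p.1, m) ∈ q
    · simp only [hm, true_and, if_pos]
      rw [← Finset.sum_filter, X.filter_contains (m, p.2)]
      simp
    · simp [hm]
  rw [Finset.sum_congr rfl (fun m _ => h2 m), ← Finset.sum_filter, Finset.sum_const,
    smul_eq_mul, mul_one, X.card_point hq p.1]

lemma sum_c_left {q c0 : BRel Ω} (hq : q ∈ X.S) (hc : c0 ∈ X.S) (α : Ω) :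
    ∑ s ∈ X.S, X.c q c0 s * X.n s = X.n q * X.n c0 := by
  have h1 : ∀ γ : Ω, (∑ ν : Ω, if (α, ν) ∈ q ∧ (ν, γ) ∈ c0 then 1 else 0)
      = X.c q c0 (X.rel α γ) := by
    intro γ
    rw [← X.c_spec q hq c0 hc (X.rel α γ) (X.rel_mem_S α γ) (α, γ) (X.mem_rel α γ),
      Finset.card_filter]
  have h2 : (∑ ν : Ω, ∑ γ : Ω, if (α, ν) ∈ q ∧ (ν, γ) ∈ c0 then 1 else 0)
      = X.n q * X.n c0 := by
    have h0 : ∀ ν : Ω, (∑ γ : Ω, if (α, ν) ∈ q ∧ (ν, γ) ∈ c0 then 1 else 0)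
        = if (α, ν) ∈ q then X.n c0 else 0 := by
      intro ν
      by_cases hν : (α, ν) ∈ q
      · simp only [hν, true_and, if_pos]
        rw [← Finset.sum_filter, Finset.sum_const, smul_eq_mul, mul_one, X.card_point hc ν]
      · simp [hν]
    rw [Finset.sum_congr rfl (fun ν _ => h0 ν), ← Finset.sum_filter, Finset.sum_const,
      smul_eq_mul, X.card_point hq α]
  rw [← h2, Finset.sum_comm]
  rw [Finset.sum_congr rfl (fun γ (_ : γ ∈ (Finset.univ : Finset Ω)) => h1 γ)]
  rw [← Finset.sum_fiberwise_of_maps_to (g := fun γ => X.rel α γ)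
    (fun γ _ => X.rel_mem_S α γ) (fun γ => X.c q c0 (X.rel α γ))]
  apply Finset.sum_congr rfl
  intro s' hs'
  have hf : Finset.univ.filter (fun γ => X.rel α γ = s')
      = Finset.univ.filter (fun γ => (α, γ) ∈ s') := by
    apply Finset.filter_congr
    intro γ _
    constructor
    · rintro rfl
      exact X.mem_rel α γ
    · intro h
      exact X.rel_eq hs' h
  have : ∑ γ ∈ Finset.univ.filter (fun γ => X.rel α γ = s'), X.c q c0 (X.rel α γ)
      = ∑ γ ∈ Finset.univ.filter (fun γ => X.rel α γ = s'), X.c q c0 s' := by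
    apply Finset.sum_congr rfl
    intro γ hγ
    rw [(Finset.mem_filter.1 hγ).2]
  rw [this, Finset.sum_const, smul_eq_mul, hf, X.card_point hs' α, mul_comm]


lemma diag_mem_cp_conv {a : BRel Ω} (ha : a ∈ X.S) : diagRel Ω ∈ X.cp a (convRel a) := by
  obtain ⟨⟨p1, p2⟩, hp⟩ := X.nonempty a ha
  have := X.mem_cp_of_witness ha (X.conv_mem a ha) hp (mem_convRel.2 hp)
  rwa [X.rel_diag] at this

lemma mem_cpS_left {e a b : BRel Ω} (hb : b ∈ X.S) (he : e ∈ X.cp a (convRel a)) :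
    e ∈ X.cpS (X.cp a (convRel a)) (X.cp b (convRel b)) := by
  have heS := X.cp_mem_S he
  obtain ⟨⟨p1, p2⟩, hp⟩ := X.nonempty e heS
  have hed : e ∈ X.cp e (diagRel Ω) := by
    have := X.mem_cp_of_witness heS X.diag_mem hp (mem_diagRel.2 rfl)
    rwa [X.rel_eq heS hp] at this
  exact Finset.mem_biUnion.2 ⟨e, he,
    Finset.mem_biUnion.2 ⟨diagRel Ω, X.diag_mem_cp_conv hb, hed⟩⟩

lemma mem_cpS_right {e a b : BRel Ω} (ha : a ∈ X.S) (he : e ∈ X.cp b (convRel b)) :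
    e ∈ X.cpS (X.cp a (convRel a)) (X.cp b (convRel b)) := by
  have heS := X.cp_mem_S he
  obtain ⟨⟨p1, p2⟩, hp⟩ := X.nonempty e heS
  have hed : e ∈ X.cp (diagRel Ω) e := by
    have := X.mem_cp_of_witness X.diag_mem heS (mem_diagRel.2 rfl) hp
    rwa [X.rel_eq heS hp] at this
  exact Finset.mem_biUnion.2 ⟨diagRel Ω, X.diag_mem_cp_conv ha,
    Finset.mem_biUnion.2 ⟨e, he, hed⟩⟩

lemma adj_of_inter {q c0 : BRel Ω} {k : ℕ} (hq : q ∈ X.S) (hc : c0 ∈ X.S) (hk : k ≠ 0)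
    (hnq : X.n q = k) (hnc : X.n c0 = k)
    (hval' : ∀ s ∈ X.S, X.n s ≤ k)
    (hint : ∀ e, e ∈ X.cp q (convRel q) → e ∈ X.cp c0 (convRel c0) → e = diagRel Ω) :
    X.adj q c0 := by
  obtain ⟨⟨p1, p2⟩, hp⟩ := X.nonempty c0 hc
  have hle1 : ∀ s ∈ X.S, X.c (convRel q) c0 s ≤ 1 := by
    intro s hs
    obtain ⟨⟨s1, s2⟩, hsp⟩ := X.nonempty s hs
    rw [← X.c_spec (convRel q) (X.conv_mem q hq) c0 hc s hs (s1, s2) hsp]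
    apply Finset.card_le_one.2
    intro ν1 h1 ν2 h2
    obtain ⟨hq1, hc1⟩ := (Finset.mem_filter.1 h1).2
    obtain ⟨hq2, hc2⟩ := (Finset.mem_filter.1 h2).2
    have e1 : (ν1, s1) ∈ q := mem_convRel.1 hq1
    have e2 : (ν2, s1) ∈ q := mem_convRel.1 hq2
    have hqq : X.rel ν1 ν2 ∈ X.cp q (convRel q) :=
      X.mem_cp_of_witness hq (X.conv_mem q hq) e1 (mem_convRel.2 e2)
    have hcc : X.rel ν1 ν2 ∈ X.cp c0 (convRel c0) :=
      X.mem_cp_of_witness hc (X.conv_mem c0 hc) hc1 (mem_convRel.2 hc2)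
    have hd := hint _ hqq hcc
    have hm := X.mem_rel ν1 ν2
    rw [hd] at hm
    exact mem_diagRel.1 hm
  have hsupp : ∀ s ∈ X.S, (X.c q s c0 ≠ 0 ↔ X.c (convRel q) c0 s ≠ 0) := by
    intro s hs
    constructor
    · intro h
      obtain ⟨m, hm1, hm2⟩ := X.exists_mid_of_c_ne hq hs hc h hp
      exact X.c_ne_of_mid (X.conv_mem q hq) hc hs hm2 (mem_convRel.2 hm1) hp
    · intro h
      obtain ⟨⟨s1, s2⟩, hsp⟩ := X.nonempty s hs
      obtain ⟨m, hm1, hm2⟩ := X.exists_mid_of_c_ne (X.conv_mem q hq) hc hs h hsp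
      exact X.c_ne_of_mid hq hs hc hm2 (mem_convRel.1 hm1) hsp
  set T := X.cp (convRel q) c0 with hT
  have hTsub : T ⊆ X.S := Finset.filter_subset _ _
  have hST : X.S.filter (fun s => s ∈ T) = T := by
    ext a
    simp only [Finset.mem_filter]
    exact ⟨fun h => h.2, fun h => ⟨hTsub h, h⟩⟩
  have hsum1 := X.sum_c_left (X.conv_mem q hq) hc p1
  rw [X.n_conv hq, hnq, hnc] at hsum1
  have hbound : (k * k : ℕ) ≤ T.card * k := by
    calc k * k = ∑ s ∈ X.S, X.c (convRel q) c0 s * X.n s := hsum1.symm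
      _ ≤ ∑ s ∈ X.S, (if s ∈ T then k else 0) := by
          apply Finset.sum_le_sum
          intro s hsS
          by_cases h0 : X.c (convRel q) c0 s = 0
          · simp [h0]
          · have hsT : s ∈ T := Finset.mem_filter.2 ⟨hsS, h0⟩
            rw [if_pos hsT]
            calc X.c (convRel q) c0 s * X.n s ≤ 1 * k :=
                  Nat.mul_le_mul (hle1 s hsS) (hval' s hsS)
              _ = k := one_mul k
      _ = T.card * k := by
          rw [← Finset.sum_filter, hST, Finset.sum_const, smul_eq_mul]
  have hTk : k ≤ T.card := Nat.le_of_mul_le_mul_right hbound (Nat.pos_of_ne_zero hk)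
  have hsum2 : ∑ s ∈ X.S, X.c q s c0 = k := by
    rw [X.sum_c_right hq hc hp, hnq]
  have hoff : ∀ s ∈ X.S, s ∉ T → X.c q s c0 = 0 := by
    intro s hsS hsT
    by_contra h0
    exact hsT (Finset.mem_filter.2 ⟨hsS, (hsupp s hsS).1 h0⟩)
  have hsum2' : ∑ s ∈ T, X.c q s c0 = k := by
    rw [← hsum2]
    exact (Finset.sum_subset hTsub (fun s hsS hsT => hoff s hsS hsT)).symm ▸ rfl
  have hone : ∀ s ∈ T, 1 ≤ X.c q s c0 := by
    intro s hsT
    have hsS := hTsub hsT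
    have h0 : X.c q s c0 ≠ 0 := (hsupp s hsS).2 (Finset.mem_filter.1 hsT).2
    omega
  show ∀ s ∈ X.cp (convRel q) c0, X.c q s c0 = 1
  intro s hsmem
  by_contra hne
  have hlt : ∑ _t ∈ T, 1 < ∑ t ∈ T, X.c q t c0 :=
    Finset.sum_lt_sum hone ⟨s, hsmem, by have := hone s hsmem; omega⟩
  rw [hsum2'] at hlt
  have hcard : T.card < k := by simpa using hlt
  omega

lemma big {a b q u w : BRel Ω} {k : ℕ} (ha : a ∈ X.S) (hb : b ∈ X.S) (hq : q ∈ X.S)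
    (hnb : X.n b = k) (hnq : X.n q = k) (hk : k ≠ 0)
    (hadjqb : X.adj q b)
    (hint : ∀ e, e ∈ X.cp q (convRel q) →
      e ∈ X.cpS (X.cp a (convRel a)) (X.cp b (convRel b)) → e = diagRel Ω)
    (hu : u ∈ X.cp (convRel a) q) (hw : w ∈ X.cp (convRel b) q)
    {t1 t2 : BRel Ω}
    (h1 : t1 ∈ X.cp (convRel a) b) (h1' : t1 ∈ X.cp u (convRel w))
    (h2 : t2 ∈ X.cp (convRel a) b) (h2' : t2 ∈ X.cp u (convRel w)) : t1 = t2 := by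
  have haS := X.conv_mem a ha
  have hbS := X.conv_mem b hb
  have huS := X.cp_mem_S hu
  have hwS := X.cp_mem_S hw
  have hwS' := X.conv_mem w hwS
  obtain ⟨⟨β, δ⟩, hβδ⟩ := X.nonempty u huS
  obtain ⟨α, hα1, hα2⟩ := X.exists_witness_of_mem_cp haS hq hu hβδ
  have hαβ : (α, β) ∈ a := mem_convRel.1 hα1
  have hcount : X.c b w q = 1 := by
    have hwconv : convRel w ∈ X.cp (convRel q) b := by
      have h := X.conv_mem_cp hbS hq hw
      rwa [convRel_convRel] at h
    have ht := X.c_transfer hb hwS hq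
    rw [hadjqb (convRel w) hwconv, mul_one, hnb, hnq] at ht
    exact Nat.eq_of_mul_eq_mul_left (Nat.pos_of_ne_zero hk) (by rw [mul_one]; exact ht)
  have hstep : ∀ t, t ∈ X.cp (convRel a) b → t ∈ X.cp u (convRel w) →
      ∃ γ, (β, γ) ∈ t ∧ (α, γ) ∈ b ∧ (γ, δ) ∈ w := by
    intro t ht ht'
    have htS := X.cp_mem_S ht
    obtain ⟨⟨m, n0⟩, hmn⟩ := X.nonempty t htS
    obtain ⟨g, hg1, hg2⟩ := X.exists_witness_of_mem_cp huS hwS' ht' hmn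
    obtain ⟨γ, hγ1, hγ2⟩ :=
      X.triangle_transfer htS hwS huS hmn (mem_convRel.1 hg2) hg1 hβδ
    obtain ⟨μ, hμ1, hμ2⟩ := X.exists_witness_of_mem_cp haS hb ht hγ1
    obtain ⟨α', hα'1, hα'2⟩ := X.exists_witness_of_mem_cp hbS hq hw hγ2
    have he : X.rel α α' ∈ X.cp q (convRel q) :=
      X.mem_cp_of_witness hq (X.conv_mem q hq) hα2 (mem_convRel.2 hα'2)
    have hf : X.rel α μ ∈ X.cp a (convRel a) := X.mem_cp_of_witness ha haS hαβ hμ1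
    have hg' : X.rel μ α' ∈ X.cp b (convRel b) := X.mem_cp_of_witness hb hbS hμ2 hα'1
    have hefg : X.rel α α' ∈ X.cp (X.rel α μ) (X.rel μ α') :=
      X.mem_cp_of_witness (X.rel_mem_S α μ) (X.rel_mem_S μ α')
        (X.mem_rel α μ) (X.mem_rel μ α')
    have hcpS : X.rel α α' ∈ X.cpS (X.cp a (convRel a)) (X.cp b (convRel b)) :=
      Finset.mem_biUnion.2 ⟨_, hf, Finset.mem_biUnion.2 ⟨_, hg', hefg⟩⟩
    have hdiag := hint _ he hcpS
    have hm : (α, α') ∈ diagRel Ω := hdiag ▸ X.mem_rel α α'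
    have hαα' : α = α' := mem_diagRel.1 hm
    subst hαα'
    exact ⟨γ, hγ1, mem_convRel.1 hα'1, hγ2⟩
  obtain ⟨γ1, hA1, hB1, hC1⟩ := hstep t1 h1 h1'
  obtain ⟨γ2, hA2, hB2, hC2⟩ := hstep t2 h2 h2'
  have hcard := X.c_spec b hb w hwS q hq (α, δ) hα2
  rw [hcount] at hcard
  have hγeq : γ1 = γ2 := by
    have hm1 : γ1 ∈ Finset.univ.filter (fun m => (α, m) ∈ b ∧ (m, δ) ∈ w) := by
      simp [hB1, hC1]
    have hm2 : γ2 ∈ Finset.univ.filter (fun m => (α, m) ∈ b ∧ (m, δ) ∈ w) := by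
      simp [hB2, hC2]
    obtain ⟨x0, hx0⟩ := Finset.card_eq_one.1 hcard
    rw [hx0] at hm1 hm2
    rw [Finset.mem_singleton.1 hm1, Finset.mem_singleton.1 hm2]
  rw [← X.rel_eq (X.cp_mem_S h1) hA1, ← X.rel_eq (X.cp_mem_S h2) hA2, hγeq]

end AssocScheme

open AssocScheme

theorem linked_of_generic_q (X : AssocScheme Ω) (k : ℕ) (hk : 1 < k)
    (hval : ∀ s ∈ X.S, X.n s = 1 ∨ X.n s = k)
    (x : BRel Ω) (hx : x ∈ X.Sk k) (y : BRel Ω) (hy : y ∈ X.Sk k) (z : BRel Ω) (hz : z ∈ X.Sk k)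
    (hxz : X.adj x z) (hzy : X.adj z y)
    (r : BRel Ω) (hr : r ∈ X.cp (convRel x) z) (s : BRel Ω) (hs : s ∈ X.cp (convRel z) y)
    (hcond : ∃ q ∈ X.Sk k,
      X.cp q (convRel q) ∩
        (X.cpS (X.cp x (convRel x)) (X.cp y (convRel y)) ∪
         X.cpS (X.cp x (convRel x)) (X.cp z (convRel z)) ∪
         X.cpS (X.cp z (convRel z)) (X.cp y (convRel y))) = {diagRel Ω}) :
    ∃ t, X.linked k x y z r s t := by
  classical
  obtain ⟨q, hqSk, hqint⟩ := hcond
  obtain ⟨hqS, hnq⟩ := Finset.mem_filter.1 hqSk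
  obtain ⟨hxS, hnx⟩ := Finset.mem_filter.1 hx
  obtain ⟨hyS, hny⟩ := Finset.mem_filter.1 hy
  obtain ⟨hzS, hnz⟩ := Finset.mem_filter.1 hz
  have hk0 : k ≠ 0 := by omega
  have hval' : ∀ s ∈ X.S, X.n s ≤ k := by
    intro s hsS
    rcases hval s hsS with h | h <;> omega
  have hQ : ∀ e, e ∈ X.cp q (convRel q) →
      e ∈ (X.cpS (X.cp x (convRel x)) (X.cp y (convRel y)) ∪
           X.cpS (X.cp x (convRel x)) (X.cp z (convRel z)) ∪
           X.cpS (X.cp z (convRel z)) (X.cp y (convRel y))) → e = diagRel Ω := by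
    intro e h1 h2
    have he : e ∈ ({diagRel Ω} : Finset (BRel Ω)) := by
      rw [← hqint]
      exact Finset.mem_inter.2 ⟨h1, h2⟩
    exact Finset.mem_singleton.1 he
  have hQxy : ∀ e, e ∈ X.cp q (convRel q) →
      e ∈ X.cpS (X.cp x (convRel x)) (X.cp y (convRel y)) → e = diagRel Ω :=
    fun e h1 h2 => hQ e h1 (Finset.mem_union.2 (Or.inl (Finset.mem_union.2 (Or.inl h2))))
  have hQxz : ∀ e, e ∈ X.cp q (convRel q) →
      e ∈ X.cpS (X.cp x (convRel x)) (X.cp z (convRel z)) → e = diagRel Ω :=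
    fun e h1 h2 => hQ e h1 (Finset.mem_union.2 (Or.inl (Finset.mem_union.2 (Or.inr h2))))
  have hQzy : ∀ e, e ∈ X.cp q (convRel q) →
      e ∈ X.cpS (X.cp z (convRel z)) (X.cp y (convRel y)) → e = diagRel Ω :=
    fun e h1 h2 => hQ e h1 (Finset.mem_union.2 (Or.inr h2))
  have hadjx : X.adj q x := X.adj_of_inter hqS hxS hk0 hnq hnx hval'
    (fun e h1 h2 => hQxy e h1 (X.mem_cpS_left hyS h2))
  have hadjy : X.adj q y := X.adj_of_inter hqS hyS hk0 hnq hny hval'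
    (fun e h1 h2 => hQxy e h1 (X.mem_cpS_right hxS h2))
  have hadjz : X.adj q z := X.adj_of_inter hqS hzS hk0 hnq hnz hval'
    (fun e h1 h2 => hQxz e h1 (X.mem_cpS_right hxS h2))
  have hxS' := X.conv_mem x hxS
  have hyS' := X.conv_mem y hyS
  have hzS' := X.conv_mem z hzS
  have hrS := X.cp_mem_S hr
  have hsS := X.cp_mem_S hs
  obtain ⟨⟨β, γ⟩, hβγ⟩ := X.nonempty r hrS
  obtain ⟨α, hαx', hαz⟩ := X.exists_witness_of_mem_cp hxS' hzS hr hβγ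
  have hαx : (α, β) ∈ x := mem_convRel.1 hαx'
  obtain ⟨δ, hδ⟩ := X.exists_point hqS (by rw [hnq]; exact hk0) α
  have hcnz : X.c s (convRel y) (convRel z) ≠ 0 := by
    have ht := X.c_transfer hzS' hyS hsS
    have hcs : X.c (convRel z) y s ≠ 0 := (Finset.mem_filter.1 hs).2
    have hns := X.n_ne_zero hsS
    intro h0
    rw [h0, mul_zero] at ht
    exact (Nat.mul_ne_zero hns hcs) ht
  obtain ⟨γ', hγ'1, hγ'2⟩ :=
    X.exists_mid_of_c_ne hsS hyS' hzS' hcnz (mem_convRel.2 hαz)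
  have hαy : (α, γ') ∈ y := mem_convRel.1 hγ'2
  have huS := X.rel_mem_S β δ
  have hvS := X.rel_mem_S γ' δ
  have hwS := X.rel_mem_S γ δ
  have humem : X.rel β δ ∈ X.cp (convRel x) q := X.mem_cp_of_witness hxS' hqS hαx' hδ
  have hvmem : X.rel γ' δ ∈ X.cp (convRel y) q :=
    X.mem_cp_of_witness hyS' hqS (mem_convRel.2 hαy) hδ
  have hwmem : X.rel γ δ ∈ X.cp (convRel z) q :=
    X.mem_cp_of_witness hzS' hqS (mem_convRel.2 hαz) hδ
  have htrs : X.rel β γ' ∈ X.cp r s := X.mem_cp_of_witness hrS hsS hβγ hγ'1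
  have hrmem2 : r ∈ X.cp (X.rel β δ) (convRel (X.rel γ δ)) := by
    have h := X.mem_cp_of_witness huS (X.conv_mem _ hwS)
      (X.mem_rel β δ) (mem_convRel.2 (X.mem_rel γ δ))
    rwa [X.rel_eq hrS hβγ] at h
  have hsmem2 : s ∈ X.cp (X.rel γ δ) (convRel (X.rel γ' δ)) := by
    have h := X.mem_cp_of_witness hwS (X.conv_mem _ hvS)
      (X.mem_rel γ δ) (mem_convRel.2 (X.mem_rel γ' δ))
    rwa [X.rel_eq hsS hγ'1] at h
  have htmem_xy : X.rel β γ' ∈ X.cp (convRel x) y := X.mem_cp_of_witness hxS' hyS hαx' hαy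
  have htmem_uv : X.rel β γ' ∈ X.cp (X.rel β δ) (convRel (X.rel γ' δ)) :=
    X.mem_cp_of_witness huS (X.conv_mem _ hvS)
      (X.mem_rel β δ) (mem_convRel.2 (X.mem_rel γ' δ))
  have hsing1 : X.cp (convRel x) z ∩ X.cp (X.rel β δ) (convRel (X.rel γ δ)) = {r} := by
    apply Finset.eq_singleton_iff_unique_mem.2
    refine ⟨Finset.mem_inter.2 ⟨hr, hrmem2⟩, ?_⟩
    intro e he
    obtain ⟨he1, he2⟩ := Finset.mem_inter.1 he
    exact X.big hxS hzS hqS hnz hnq hk0 hadjz hQxz humem hwmem he1 he2 hr hrmem2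
  have hsing2 : X.cp (convRel z) y ∩ X.cp (X.rel γ δ) (convRel (X.rel γ' δ)) = {s} := by
    apply Finset.eq_singleton_iff_unique_mem.2
    refine ⟨Finset.mem_inter.2 ⟨hs, hsmem2⟩, ?_⟩
    intro e he
    obtain ⟨he1, he2⟩ := Finset.mem_inter.1 he
    exact X.big hzS hyS hqS hny hnq hk0 hadjy hQzy hwmem hvmem he1 he2 hs hsmem2
  have hsing3 : X.cp (convRel x) y ∩ X.cp (X.rel β δ) (convRel (X.rel γ' δ))
      = {X.rel β γ'} := by
    apply Finset.eq_singleton_iff_unique_mem.2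
    refine ⟨Finset.mem_inter.2 ⟨htmem_xy, htmem_uv⟩, ?_⟩
    intro e he
    obtain ⟨he1, he2⟩ := Finset.mem_inter.1 he
    exact X.big hxS hyS hqS hny hnq hk0 hadjy hQxy humem hvmem he1 he2 htmem_xy htmem_uv
  exact ⟨X.rel β γ', q, hqSk, hadjx, hadjy, hadjz,
    X.rel β δ, humem, X.rel γ' δ, hvmem, X.rel γ δ, hwmem,
    htrs, hsing1, hsing2, hsing3⟩
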